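/- Fix l ∈ [0, 1/4], a budget C ∈ ℕ, and for each item i ∈ I: a probability distribution p_i on states {1,…,B}, costs c_i : {1,…,B} → ℕ that are nondecreasing in the state, and nonnegative reals y(i,t) for t ∈ {1,…,C − c_i(B)} with ȳ(i) := Σ_t y(i,t) ≤ 1. Assume that for every k ∈ {1,…,C}: Σ_{i∈I} (Σ_{s=1}^B p_i(s)·min{c_i(s), k}) · (Σ_{t'=1}^k y(i,t')) ≤ 2·l·k. Consider the random experiment where, independently for each item i, with probability y(i,t)·p_i(s) item i is active with start time t and state s (for each admissible t and s), and with probability 1 − ȳ(i) item i is inactive. Then for every item i ∈ I and every k ∈ {1,…,C}: Pr[ Σ_{i' ≠ i : i' active and t(i') ≤ k} min{c_{i'}(s(i')), k} ≤ k ] ≥ 1 − 2l. -/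

import Mathlib

/-!
Under the product distribution, linearity of expectation and independence give the expected
truncated cost of the items `i' ≠ i` started by time `k` as
`∑_{i' ≠ i} (∑_s p i' s * min (c i' s) k) * (∑_{t ≤ k} y i' t) ≤ 2 l k`.
The truncated cost is a natural number, so exceeding `k` means reaching `k + 1`, and Markov's
inequality bounds the failure probability by `2 l k / (k + 1) ≤ 2 l`.
-/

open Finset

/-- The outcome of a single item in the random experiment: an element of
`Fin (C+1) × Fin (B+1)`, where `(0, 0)` encodes "inactive" and `(t, s)` with `t ≠ 0`,
`s ≠ 0` encodes "active with start time `t` and state `s`".  The item is inactive with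
probability `1 - ȳ i` and active with start time `t` and state `s` with probability
`y i t * p i s`. -/
def outcomeProb {I : Type} (C B : ℕ) (y : I → ℕ → ℝ) (p : I → ℕ → ℝ) (i : I)
    (o : Fin (C + 1) × Fin (B + 1)) : ℝ :=
  if o.1 = 0 then
    (if o.2 = 0 then 1 - ∑ t ∈ Finset.Icc 1 C, y i t else 0)
  else
    (if o.2 = 0 then 0 else y i (o.1 : ℕ) * p i (o.2 : ℕ))

section ProductWeights

variable {I A : Type*} [Fintype I] [DecidableEq I] [Fintype A] {w : I → A → ℝ}

theorem sum_pi_prod_eq_one (hw : ∀ j, ∑ a, w j a = 1) : ∑ ω : I → A, ∏ j, w j (ω j) = 1 := by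
  rw [← Fintype.prod_sum, prod_eq_one fun j _ => hw j]

theorem sum_pi_mul_prod_eq (hw : ∀ j, ∑ a, w j a = 1) (i : I) (g : A → ℝ) :
    ∑ ω : I → A, g (ω i) * ∏ j, w j (ω j) = ∑ a, g a * w i a := by
  -- tilt the `i`-th factor by `g`; the other factors still sum to one
  have hupd : ∀ j ∈ univ.erase i, ∀ a, Function.update w i (fun a => g a * w i a) j a = w j a :=
    fun j hj a => by rw [Function.update_of_ne (ne_of_mem_erase hj)]
  have hv : ∀ ω : I → A,
      ∏ j, Function.update w i (fun a => g a * w i a) j (ω j) = g (ω i) * ∏ j, w j (ω j) :=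
    fun ω => by
      rw [← mul_prod_erase _ _ (mem_univ i), ← mul_prod_erase _ (fun j => w j (ω j)) (mem_univ i),
        prod_congr rfl fun j hj => hupd j hj (ω j)]
      simp [mul_assoc]
  simp_rw [← hv, ← Fintype.prod_sum, ← mul_prod_erase _ _ (mem_univ i)]
  rw [prod_eq_one fun j hj => by simp_rw [hupd j hj, hw], mul_one]
  simp

theorem sum_pi_sum_mul_prod_eq (hw : ∀ j, ∑ a, w j a = 1) (s : Finset I) (g : I → A → ℝ) :
    ∑ ω : I → A, (∑ j ∈ s, g j (ω j)) * ∏ j, w j (ω j) = ∑ j ∈ s, ∑ a, g j a * w j a := by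
  simp_rw [sum_mul]
  rw [sum_comm]
  exact sum_congr rfl fun j _ => sum_pi_mul_prod_eq hw j (g j)

end ProductWeights

theorem one_sub_div_le_sum_ite_le {Ω : Type*} [Fintype Ω] {w : Ω → ℝ} (hw : ∀ ω, 0 ≤ w ω)
    (hw1 : ∑ ω, w ω = 1) (X : Ω → ℕ) (k : ℕ) :
    1 - (∑ ω, X ω * w ω) / (k + 1) ≤ ∑ ω, if X ω ≤ k then w ω else 0 := by
  calc 1 - (∑ ω, X ω * w ω) / (k + 1) = ∑ ω, (w ω - X ω * w ω / (k + 1)) := by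
        rw [sum_sub_distrib, hw1, sum_div]
    _ ≤ _ := sum_le_sum fun ω _ => ?_
  have hk : (0 : ℝ) < k + 1 := by positivity
  split_ifs with hX
  · have : 0 ≤ X ω * w ω / (k + 1) := by have := hw ω; positivity
    linarith
  · have hX' : (k : ℝ) + 1 ≤ X ω := by exact_mod_cast Nat.succ_le_of_lt (not_le.1 hX)
    rw [sub_nonpos, le_div_iff₀ hk]
    nlinarith [hw ω]

theorem Fin.sum_univ_val_eq_add_sum_Icc {M : Type*} [AddCommMonoid M] (n : ℕ) (f : ℕ → M) :
    ∑ t : Fin (n + 1), f t = f 0 + ∑ t ∈ Icc 1 n, f t := by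
  rw [Fin.sum_univ_eq_sum_range (f ·), range_eq_Ico, sum_eq_sum_Ico_succ_bot n.succ_pos]
  rfl

def truncatedCost {C B : ℕ} (c : ℕ → ℕ) (k : ℕ) (o : Fin (C + 1) × Fin (B + 1)) : ℕ :=
  if o.1 ≠ 0 ∧ (o.1 : ℕ) ≤ k then min (c o.2) k else 0

section OutcomeProb

variable {I : Type} {C B : ℕ} {y p : I → ℕ → ℝ}

theorem sum_mul_outcomeProb (i : I) (G : ℕ → ℕ → ℝ) :
    ∑ o, G o.1 o.2 * outcomeProb C B y p i o =
      G 0 0 * (1 - ∑ t ∈ Icc 1 C, y i t) +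
        ∑ t ∈ Icc 1 C, ∑ s ∈ Icc 1 B, G t s * (y i t * p i s) := by
  set H : ℕ → ℕ → ℝ := fun t s => G t s *
    if t = 0 then (if s = 0 then 1 - ∑ t ∈ Icc 1 C, y i t else 0)
    else if s = 0 then 0 else y i t * p i s
  have hH : ∀ (t : Fin (C + 1)) (s : Fin (B + 1)), G t s * outcomeProb C B y p i (t, s) = H t s :=
    fun t s => by simp only [H, outcomeProb, Fin.ext_iff, Fin.val_zero]
  rw [Fintype.sum_prod_type]
  simp only [hH, Fin.sum_univ_val_eq_add_sum_Icc _ (H _),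
    Fin.sum_univ_val_eq_add_sum_Icc _ fun t => H t 0 + ∑ s ∈ Icc 1 B, H t s]
  have hpos : ∀ {m n : ℕ}, m ∈ Icc 1 n → m ≠ 0 := fun h => Nat.one_le_iff_ne_zero.1 (mem_Icc.1 h).1
  congr 1
  · rw [sum_eq_zero fun s hs => by simp [H, hpos hs]]
    simp [H]
  · refine sum_congr rfl fun t ht => ?_
    simp only [H, hpos ht, if_false, if_true, mul_zero, zero_add]
    exact sum_congr rfl fun s hs => by simp [hpos hs]

theorem outcomeProb_nonneg (hpn : ∀ i s, 0 ≤ p i s) (hyn : ∀ i t, 0 ≤ y i t)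
    (hybar : ∀ i, ∑ t ∈ Icc 1 C, y i t ≤ 1) (i : I) (o : Fin (C + 1) × Fin (B + 1)) :
    0 ≤ outcomeProb C B y p i o := by
  unfold outcomeProb
  split_ifs
  exacts [sub_nonneg.2 (hybar i), le_rfl, le_rfl, mul_nonneg (hyn _ _) (hpn _ _)]

theorem sum_outcomeProb (hps : ∀ i, ∑ s ∈ Icc 1 B, p i s = 1) (i : I) :
    ∑ o, outcomeProb C B y p i o = 1 := by
  simpa [← mul_sum, hps] using sum_mul_outcomeProb (C := C) (B := B) (y := y) (p := p) i fun _ _ => 1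

theorem sum_truncatedCost_mul_outcomeProb (c : ℕ → ℕ) {k : ℕ} (hk : k ≤ C) (i : I) :
    ∑ o, (truncatedCost c k o : ℝ) * outcomeProb C B y p i o =
      (∑ s ∈ Icc 1 B, p i s * (min (c s) k : ℝ)) * ∑ t ∈ Icc 1 k, y i t := by
  have hcast : ∀ o : Fin (C + 1) × Fin (B + 1), (truncatedCost c k o : ℝ) =
      if (o.1 : ℕ) ≠ 0 ∧ (o.1 : ℕ) ≤ k then ((min (c o.2) k : ℕ) : ℝ) else 0 := fun o => by
    simp only [truncatedCost, ne_eq, Fin.ext_iff, Fin.val_zero]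
    split_ifs <;> simp
  have hIcc : (Icc 1 C).filter (· ≤ k) = Icc 1 k := by
    ext t
    simp only [mem_filter, mem_Icc]
    omega
  simp only [hcast]
  rw [sum_mul_outcomeProb i fun t s => if t ≠ 0 ∧ t ≤ k then ((min (c s) k : ℕ) : ℝ) else 0,
    ← hIcc, sum_filter, mul_sum]
  simp only [ne_eq, not_true_eq_false, false_and, if_false, zero_mul, zero_add]
  refine sum_congr rfl fun t ht => ?_
  have ht0 : t ≠ 0 := Nat.one_le_iff_ne_zero.1 (mem_Icc.1 ht).1
  by_cases htk : t ≤ k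
  · simp only [ht0, htk, not_false_eq_true, and_self, if_true, sum_mul, Nat.cast_min]
    exact sum_congr rfl fun s _ => by ring
  · simp [htk]

end OutcomeProb

theorem truncated_cost_le_budget_prob_general {I : Type} [Fintype I] [DecidableEq I]
    (B C : ℕ)
    (l : ℝ)
    (p : I → ℕ → ℝ) (hpn : ∀ i s, 0 ≤ p i s)
    (hps : ∀ i, ∑ s ∈ Finset.Icc 1 B, p i s = 1)
    (c : I → ℕ → ℕ)
    (y : I → ℕ → ℝ) (hyn : ∀ i t, 0 ≤ y i t)
    (hybar : ∀ i, ∑ t ∈ Finset.Icc 1 C, y i t ≤ 1)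
    (hcon : ∀ k ∈ Finset.Icc 1 C,
      ∑ i, (∑ s ∈ Finset.Icc 1 B, p i s * (min (c i s) k : ℝ)) *
          (∑ t' ∈ Finset.Icc 1 k, y i t') ≤ 2 * l * (k : ℝ)) :
    ∀ i : I, ∀ k ∈ Finset.Icc 1 C,
      (∑ ω : I → Fin (C + 1) × Fin (B + 1),
        if (∑ i' ∈ Finset.univ.erase i,
              (if (ω i').1 ≠ 0 ∧ ((ω i').1 : ℕ) ≤ k
                then min (c i' ((ω i').2 : ℕ)) k else 0)) ≤ k
          then ∏ i', outcomeProb C B y p i' (ω i') else 0) ≥ 1 - 2 * l := by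
  intro i k hk
  obtain ⟨hk1, hkC⟩ := mem_Icc.1 hk
  have hw1 := sum_outcomeProb (C := C) (y := y) hps
  have hmarkov := one_sub_div_le_sum_ite_le
    (fun ω => prod_nonneg fun j _ => outcomeProb_nonneg hpn hyn hybar j (ω j))
    (sum_pi_prod_eq_one hw1) (fun ω => ∑ i' ∈ univ.erase i, truncatedCost (c i') k (ω i')) k
  set E := ∑ ω : I → Fin (C + 1) × Fin (B + 1),
    ((∑ i' ∈ univ.erase i, truncatedCost (c i') k (ω i') : ℕ) : ℝ) * ∏ j, outcomeProb C B y p j (ω j)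
  have hE : E = ∑ i' ∈ univ.erase i, (∑ s ∈ Icc 1 B, p i' s * (min (c i' s) k : ℝ)) *
      ∑ t ∈ Icc 1 k, y i' t := by
    simp only [E, Nat.cast_sum]
    exact (sum_pi_sum_mul_prod_eq hw1 _ _).trans
      (sum_congr rfl fun j _ => sum_truncatedCost_mul_outcomeProb _ hkC j)
  have hE0 : 0 ≤ E := sum_nonneg fun ω _ =>
    mul_nonneg (Nat.cast_nonneg _) (prod_nonneg fun j _ => outcomeProb_nonneg hpn hyn hybar j (ω j))
  have hEl : E ≤ 2 * l * k := hE ▸ (sum_le_sum_of_subset_of_nonneg (erase_subset i univ)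
    fun j _ _ => mul_nonneg (sum_nonneg fun s _ => mul_nonneg (hpn j s) (by positivity))
      (sum_nonneg fun t _ => hyn j t)).trans (hcon k hk)
  have hk1' : (1 : ℝ) ≤ k := by exact_mod_cast hk1
  -- `0 ≤ E ≤ 2 l k` forces `0 ≤ l`, hence `2 l k ≤ 2 l (k + 1)`
  have hEk : E / (k + 1) ≤ 2 * l := by
    rw [div_le_iff₀ (by positivity)]
    nlinarith
  exact le_trans (by linarith) hmarkov

/-- Suppose the fractional solution `y` satisfies the time-indexed budget constraints
`∑_i (∑_s p i s * min (c i s) k) * (∑_{t' ≤ k} y i t') ≤ 2 l k` for every `k ∈ {1,…,C}`,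
where the costs `c i` are nondecreasing in the state.  Then, in the experiment where
each item is independently active with start time `t` and state `s` with probability
`y i t * p i s` (and inactive otherwise), for every item `i` and every `k ∈ {1,…,C}`,
with probability at least `1 - 2l` the total truncated cost of the active items
`i' ≠ i` with start time at most `k` is at most `k`. -/
theorem truncated_cost_le_budget_prob {I : Type} [Fintype I] [DecidableEq I]
    (B C : ℕ) (hB : 0 < B) (hC : 0 < C)
    (l : ℝ) (hl : l ∈ Set.Icc (0 : ℝ) (1 / 4))
    (p : I → ℕ → ℝ) (hpn : ∀ i s, 0 ≤ p i s)
    (hpsupp : ∀ i s, s ∉ Finset.Icc 1 B → p i s = 0)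
    (hps : ∀ i, ∑ s ∈ Finset.Icc 1 B, p i s = 1)
    (c : I → ℕ → ℕ)
    (hc : ∀ i, ∀ s ∈ Finset.Icc 1 B, ∀ s' ∈ Finset.Icc 1 B, s' ≤ s → c i s' ≤ c i s)
    (y : I → ℕ → ℝ) (hyn : ∀ i t, 0 ≤ y i t)
    (hysupp : ∀ i t, t ∉ Finset.Icc 1 (C - c i B) → y i t = 0)
    (hybar : ∀ i, ∑ t ∈ Finset.Icc 1 C, y i t ≤ 1)
    (hcon : ∀ k ∈ Finset.Icc 1 C,
      ∑ i, (∑ s ∈ Finset.Icc 1 B, p i s * (min (c i s) k : ℝ)) *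
          (∑ t' ∈ Finset.Icc 1 k, y i t') ≤ 2 * l * (k : ℝ)) :
    ∀ i : I, ∀ k ∈ Finset.Icc 1 C,
      (∑ ω : I → Fin (C + 1) × Fin (B + 1),
        if (∑ i' ∈ Finset.univ.erase i,
              (if (ω i').1 ≠ 0 ∧ ((ω i').1 : ℕ) ≤ k
                then min (c i' ((ω i').2 : ℕ)) k else 0)) ≤ k
          then ∏ i', outcomeProb C B y p i' (ω i') else 0) ≥ 1 - 2 * l :=
  truncated_cost_le_budget_prob_general B C l p hpn hps c y hyn hybar hcon
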